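/- arXiv:1507.03076 — 2 statements merged into one kernel-verified Lean document; each statement's English description precedes it below -/
import Mathlib

section
/- Let A be a finite alphabet, S a finite semigroup, and φ: A⁺ → S a surjective homomorphism from the free semigroup on A. Then for every P ∈ 𝒞𝒫_∅(S) there exists a function α assigning to each p ∈ P a κ-term α(p) over A such that: (i) for every p ∈ P, the term α(p) evaluates to p in S under the letter assignment given by φ restricted to A; and (ii) for every finite aperiodic semigroup T and every map from A to T, all the terms α(p), p ∈ P, evaluate to one and the same element of T. -/
open Pointwise

/-- `spow s n` is the power `s^(n+1)` of `s`, defined in any magma. -/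
def spow {S : Type*} [Mul S] (s : S) (n : ℕ) : S := (fun x => x * s)^[n] s

/-- The cyclic subsemigroup of `P(S)` generated by the subset `P`, namely the
collection of all setwise powers `P, P², P³, …` of `P`. -/
def cyclicSetPowers {S : Type} [Semigroup S] (P : Set S) : Set (Set S) :=
  Set.range (spow P)

/-- A subset `G` of a semigroup is a group under the induced multiplication:
it is closed under multiplication, has a two-sided identity element, and every
element has a two-sided inverse. -/
def IsGroupSet {M : Type*} [Mul M] (G : Set M) : Prop :=
  (∀ x ∈ G, ∀ y ∈ G, x * y ∈ G) ∧
    ∃ e ∈ G, (∀ x ∈ G, e * x = x ∧ x * e = x) ∧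
      ∀ x ∈ G, ∃ y ∈ G, x * y = e ∧ y * x = e

/-- `𝒞𝒫_∅(S)`: the smallest collection of nonempty subsets of `S` containing
the singletons, closed under setwise products and nonempty subsets, and
containing `⋃_{n ≥ 1} Pⁿ` whenever it contains a set `P` such that the
subsemigroup of `P(S)` generated by `P` is a cyclic group. -/
inductive CPempty {S : Type} [Semigroup S] : Set S → Prop
  | singleton (s : S) : CPempty {s}
  | mul {P Q : Set S} : CPempty P → CPempty Q → CPempty (P * Q)
  | subset {P Q : Set S} : CPempty P → Q ⊆ P → Q.Nonempty → CPempty Q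
  | group {P : Set S} : CPempty P → IsGroupSet (cyclicSetPowers P) →
      CPempty (⋃ n : ℕ, spow P n)

/-- A finite semigroup is aperiodic if for every element `s` there is `m` with
`s^m = s^(m+1)`. -/
def IsAperiodic (T : Type) [Semigroup T] : Prop :=
  ∀ t : T, ∃ m : ℕ, spow t m = spow t (m + 1)

/-- κ-terms over the alphabet `A`: letters, binary multiplication and the
unary `(ω-1)`-power. -/
inductive KTerm (A : Type) : Type
  | letter : A → KTerm A
  | mul : KTerm A → KTerm A → KTerm A
  | ommPow : KTerm A → KTerm A

/-- The evaluation relation for κ-terms in a semigroup `T`, given an assignment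
`f` of letters.  The `(ω-1)`-power of an element `s` is the element `g` of the
cyclic subsemigroup generated by `s` such that `g * s = s * g = e` and
`g * e = g`, where `e` is the (unique, in a finite semigroup) idempotent power
`s^ω` of `s`. -/
inductive KEval {A T : Type} [Semigroup T] (f : A → T) : KTerm A → T → Prop
  | letter (a : A) : KEval f (KTerm.letter a) (f a)
  | mul {u v : KTerm A} {s t : T} :
      KEval f u s → KEval f v t → KEval f (KTerm.mul u v) (s * t)
  | ommPow {u : KTerm A} {s e g : T} :
      KEval f u s →
      IsIdempotentElem e → (∃ n : ℕ, spow s n = e) →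
      (∃ n : ℕ, spow s n = g) →
      g * s = e → s * g = e → g * e = g →
      KEval f (KTerm.ommPow u) g

/-!
Induction on `𝒞𝒫_∅(S)`. Singletons are witnessed by a word mapped onto them; products and
subsets are immediate. In the group case let `E = Pᵏ` be the identity of the cyclic group of
sets. Every `x ∈ Pⁿ = PⁿE` factors as `x = y v` with `y ∈ Pⁿ`, `v ∈ E` and `y c = y` for some
`c ∈ E`, so `x = y c^(ω-1) c v`. Spelling out `y`, `c`, `v` as products of the witnesses of `P`
gives a κ-term for `x`; in an aperiodic semigroup, where the witnesses of `P` all take one value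
`t`, this term evaluates to `t^ω` whatever `x` is.
-/

section SPow

variable {M : Type*}

lemma spow_zero [Mul M] (s : M) : spow s 0 = s := rfl

lemma spow_succ [Mul M] (s : M) (n : ℕ) : spow s (n + 1) = spow s n * s :=
  Function.iterate_succ_apply' _ n s

variable [Semigroup M]

lemma spow_add (s : M) (a b : ℕ) : spow s a * spow s b = spow s (a + b + 1) := by
  induction b with
  | zero => rw [spow_zero, ← spow_succ]
  | succ b ih => rw [spow_succ, ← mul_assoc, ih, ← spow_succ]; rfl

lemma spow_spow (s : M) (a b : ℕ) : spow (spow s a) b = spow s (a * b + a + b) := by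
  induction b with
  | zero => simp [spow_zero]
  | succ b ih => rw [spow_succ, ih, spow_add]; congr 1; ring

lemma spow_eq_of_le {s : M} {m k : ℕ} (h : spow s m = spow s (m + 1)) (hk : m ≤ k) :
    spow s k = spow s m := by
  induction k, hk using Nat.le_induction with
  | base => rfl
  | succ k _ ih => rw [spow_succ, ih, ← spow_succ, ← h]

lemma spow_mul_spow_of_stable_left {s : M} {m : ℕ} (h : spow s m = spow s (m + 1)) (a : ℕ) :
    spow s a * spow s m = spow s m := by
  rw [spow_add, spow_eq_of_le h (by omega)]

lemma spow_mul_spow_of_stable_right {s : M} {m : ℕ} (h : spow s m = spow s (m + 1)) (b : ℕ) :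
    spow s m * spow s b = spow s m := by
  rw [spow_add, spow_eq_of_le h (by omega)]

lemma spow_add_eq_iterate (s : M) (k m : ℕ) : spow s (k + m) = (· * s)^[k] (spow s m) :=
  Function.iterate_add_apply _ k m s

lemma mul_spow_eq_self {u c : M} (h : u * c = u) (n : ℕ) : u * spow c n = u := by
  induction n with
  | zero => exact h
  | succ n ih => rw [spow_succ, ← mul_assoc, ih, h]

lemma exists_spow_add_eq [Finite M] (s : M) :
    ∃ n, ∀ a, n ≤ a → spow s (a + n + 1) = spow s a := by
  obtain ⟨i, j, hne, hij⟩ := Finite.exists_ne_map_eq_of_infinite (spow s)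
  wlog hlt : i < j generalizing i j
  · exact this j i hne.symm hij.symm (by omega)
  obtain ⟨k, rfl⟩ : ∃ k, j = i + k + 1 := ⟨j - i - 1, by omega⟩
  have hper : Function.IsPeriodicPt (· * s) (k + 1) (spow s i) := by
    rw [Function.IsPeriodicPt, Function.IsFixedPt, ← spow_add_eq_iterate, hij]
    congr 1
    omega
  refine ⟨k * i + k + i, fun a ha => ?_⟩
  obtain ⟨c, rfl⟩ : ∃ c, a = c + i := ⟨a - i, by omega⟩
  have := (hper.apply_iterate c).mul_const (i + 1)
  rw [Function.IsPeriodicPt, Function.IsFixedPt, ← spow_add_eq_iterate,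
    ← spow_add_eq_iterate] at this
  rw [← this]
  congr 1
  ring

/-- `e = s^ω` and `g = s^(ω-1)`. -/
lemma exists_omegaPow_pred [Finite M] (s : M) :
    ∃ e g : M, IsIdempotentElem e ∧ (∃ n, spow s n = e) ∧ (∃ n, spow s n = g) ∧
      g * s = e ∧ s * g = e ∧ g * e = g := by
  obtain ⟨n, hn⟩ := exists_spow_add_eq s
  refine ⟨spow s n, spow s (n + n), ?_, ⟨n, rfl⟩, ⟨n + n, rfl⟩, ?_, ?_, ?_⟩
  · rw [IsIdempotentElem, spow_add, hn n le_rfl]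
  · rw [← spow_succ, hn n le_rfl]
  · have h := spow_add s 0 (n + n)
    rw [spow_zero, zero_add] at h
    rw [h, hn n le_rfl]
  · rw [spow_add, hn (n + n) (by omega)]

lemma exists_mul_eq_self_of_mem_mul [Finite M] {X E : Set M} (hX : X * E ⊆ X) (hE : E * E = E)
    {x : M} (hx : x ∈ X * E) : ∃ u ∈ X, ∃ c ∈ E, ∃ v ∈ E, u * c = u ∧ u * v = x := by
  -- Choose the factorization `x = u v` with `{u} E` smallest; moving a factor of `v` into `u`
  -- cannot shrink `{u} E`, which leaves `u` in its own `{u} E`.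
  obtain ⟨u, ⟨huX, v, hvE, rfl⟩, hmin⟩ :=
    Set.exists_min_image {u ∈ X | ∃ v ∈ E, u * v = x} (fun u => ({u} * E).ncard)
      (Set.toFinite _) (by obtain ⟨u, hu, v, hv, h⟩ := hx; exact ⟨u, hu, v, hv, h⟩)
  rw [← hE] at hvE
  obtain ⟨c, hc, v, hv, rfl⟩ := hvE
  have huc : u * c ∈ X := hX (Set.mul_mem_mul huX hc)
  have hsub : {u * c} * E ⊆ {u} * E := by
    rw [← Set.singleton_mul_singleton, mul_assoc]
    exact Set.mul_subset_mul_left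
      ((Set.mul_subset_mul_right (Set.singleton_subset_iff.mpr hc)).trans hE.subset)
  have heq : {u * c} * E = {u} * E :=
    Set.eq_of_subset_of_ncard_le hsub (hmin _ ⟨huc, v, hv, mul_assoc u c v⟩)
  obtain ⟨_, rfl, c', hc', h⟩ : u * c ∈ {u * c} * E := heq ▸ Set.mul_mem_mul rfl hc
  exact ⟨u * c, huc, c', hc', v, hv, h, mul_assoc u c v⟩

end SPow

lemma IsGroupSet.exists_spow_mul_eq {S : Type} [Semigroup S] {P : Set S}
    (h : IsGroupSet (cyclicSetPowers P)) : ∃ k, ∀ n, spow P n * spow P k = spow P n := by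
  obtain ⟨-, _, ⟨k, rfl⟩, hid, -⟩ := h
  exact ⟨k, fun n => (hid _ ⟨n, rfl⟩).2⟩

namespace KEval

variable {A T : Type} [Semigroup T] {f : A → T} {u : KTerm A}

lemma exists_ommPow [Finite T] {s : T} (hu : KEval f u s) :
    ∃ g n, KEval f (.ommPow u) g ∧ g * s = spow s n := by
  obtain ⟨e, g, he, ⟨n, rfl⟩, hg, hgs, hsg, hge⟩ := exists_omegaPow_pred s
  exact ⟨g, n, .ommPow hu he ⟨n, rfl⟩ hg hgs hsg hge, hgs⟩

lemma ommPow_spow {t : T} {k m : ℕ} (hu : KEval f u (spow t k))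
    (hm : spow t m = spow t (m + 1)) : KEval f (.ommPow u) (spow t m) := by
  have hpow : spow (spow t k) m = spow t m := by
    rw [spow_spow, spow_eq_of_le hm (by omega)]
  exact .ommPow hu (spow_mul_spow_of_stable_left hm m) ⟨m, hpow⟩ ⟨m, hpow⟩
    (spow_mul_spow_of_stable_right hm k) (spow_mul_spow_of_stable_left hm k)
    (spow_mul_spow_of_stable_left hm m)

end KEval

lemma exists_kTerm_forall_hom {A : Type} (w : FreeSemigroup A) :
    ∃ u : KTerm A, ∀ (T : Type) [Semigroup T] (ψ : FreeSemigroup A →ₙ* T),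
      KEval (fun a => ψ (.of a)) u (ψ w) := by
  induction w using FreeSemigroup.recOnMul with
  | ih1 a => exact ⟨.letter a, fun T _ ψ => .letter a⟩
  | ih2 a w _ ihw =>
    obtain ⟨u, hu⟩ := ihw
    refine ⟨.mul (.letter a) u, fun T _ ψ => ?_⟩
    rw [map_mul]
    exact .mul (.letter a) (hu T ψ)

section Witness

variable {A S : Type} [Semigroup S]

def IsKWitnessed (fS : A → S) (P : Set S) : Prop :=
  ∃ α : P → KTerm A, (∀ p : P, KEval fS (α p) p) ∧
    ∀ (T : Type) [Semigroup T] [Finite T], IsAperiodic T →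
      ∀ f : A → T, ∃ t : T, ∀ p : P, KEval f (α p) t

/-- `u` behaves as a product of `n + 1` of the terms `α q`: it evaluates to `x` in `S`, and to
`t^(n+1)` wherever all the `α q` evaluate to `t`. -/
structure IsPowTerm {P : Set S} (fS : A → S) (α : P → KTerm A) (n : ℕ) (u : KTerm A) (x : S) :
    Prop where
  eval : KEval fS u x
  eval_spow : ∀ (T : Type) [Semigroup T] (f : A → T) (t : T),
    (∀ q, KEval f (α q) t) → KEval f u (spow t n)

variable {P : Set S} {fS : A → S} {α : P → KTerm A}

lemma IsPowTerm.mul {a b : ℕ} {u v : KTerm A} {x y : S} (hu : IsPowTerm fS α a u x)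
    (hv : IsPowTerm fS α b v y) : IsPowTerm fS α (a + b + 1) (.mul u v) (x * y) where
  eval := .mul hu.eval hv.eval
  eval_spow T _ f t ht := spow_add t a b ▸ .mul (hu.eval_spow T f t ht) (hv.eval_spow T f t ht)

lemma exists_isPowTerm_of_mem_spow (hα : ∀ q : P, KEval fS (α q) q) {n : ℕ} {x : S}
    (hx : x ∈ spow P n) : ∃ u, IsPowTerm fS α n u x := by
  induction n generalizing x with
  | zero => exact ⟨α ⟨x, hx⟩, hα ⟨x, hx⟩, fun T _ f t ht => ht _⟩
  | succ n ih =>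
    rw [spow_succ] at hx
    obtain ⟨y, hy, q, hq, rfl⟩ := hx
    obtain ⟨u, hu⟩ := ih hy
    exact ⟨_, hu.mul (b := 0) ⟨hα ⟨q, hq⟩, fun T _ f t ht => ht _⟩⟩

/-- If `x = y v` with `y c = y`, then `x = y c^(ω-1) c v`; in an aperiodic semigroup this
product of powers of `t` collapses to the stable power `t^(m+1)`. -/
lemma exists_kTerm_of_mem_iUnion_spow [Finite S] (hα : ∀ q : P, KEval fS (α q) q)
    (hP : IsGroupSet (cyclicSetPowers P)) {x : S} (hx : x ∈ ⋃ n, spow P n) :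
    ∃ u, KEval fS u x ∧ ∀ (T : Type) [Semigroup T] (f : A → T) (t : T) (m : ℕ),
      (∀ q, KEval f (α q) t) → spow t m = spow t (m + 1) → KEval f u (spow t m) := by
  obtain ⟨k, hk⟩ := hP.exists_spow_mul_eq
  obtain ⟨n, hxn⟩ := Set.mem_iUnion.mp hx
  obtain ⟨y, hy, c, hc, v, hv, hyc, rfl⟩ :=
    exists_mul_eq_self_of_mem_mul (hk n).subset (hk k) (by rwa [hk n])
  obtain ⟨a, ha⟩ := exists_isPowTerm_of_mem_spow hα hy
  obtain ⟨b, hb⟩ := exists_isPowTerm_of_mem_spow hα hc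
  obtain ⟨d, hd⟩ := exists_isPowTerm_of_mem_spow hα hv
  obtain ⟨g, j, hg, hgc⟩ := hb.eval.exists_ommPow
  refine ⟨.mul (.mul (.mul a (.ommPow b)) b) d, ?_, fun T _ f t m ht hm => ?_⟩
  · have hval : y * g * c * v = y * v := by rw [mul_assoc y, hgc, mul_spow_eq_self hyc]
    exact hval ▸ ((ha.eval.mul hg).mul hb.eval).mul hd.eval
  · have hb' := hb.eval_spow T f t ht
    have h := (((ha.eval_spow T f t ht).mul (hb'.ommPow_spow hm)).mul hb').mul
      (hd.eval_spow T f t ht)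
    rwa [spow_mul_spow_of_stable_left hm, spow_mul_spow_of_stable_right hm,
      spow_mul_spow_of_stable_right hm] at h

lemma isKWitnessed_singleton (φ : FreeSemigroup A →ₙ* S) (hφ : Function.Surjective φ) (s : S) :
    IsKWitnessed (fun a => φ (.of a)) {s} := by
  obtain ⟨w, rfl⟩ := hφ s
  obtain ⟨u, hu⟩ := exists_kTerm_forall_hom w
  refine ⟨fun _ => u, fun ⟨_, rfl⟩ => hu S φ,
    fun T _ _ _ f => ⟨FreeSemigroup.lift f w, fun _ => ?_⟩⟩
  simpa using hu T (FreeSemigroup.lift f)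

lemma IsKWitnessed.mul {Q : Set S} (hP : IsKWitnessed fS P) (hQ : IsKWitnessed fS Q) :
    IsKWitnessed fS (P * Q) := by
  obtain ⟨α, hαS, hαT⟩ := hP
  obtain ⟨β, hβS, hβT⟩ := hQ
  choose p hp q hq hpq using fun r : ↥(P * Q) => Set.mem_mul.mp r.2
  refine ⟨fun r => .mul (α ⟨p r, hp r⟩) (β ⟨q r, hq r⟩), fun r => hpq r ▸ .mul (hαS _) (hβS _),
    fun T _ _ hT f => ?_⟩
  obtain ⟨t₁, h₁⟩ := hαT T hT f
  obtain ⟨t₂, h₂⟩ := hβT T hT f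
  exact ⟨t₁ * t₂, fun r => .mul (h₁ _) (h₂ _)⟩

lemma IsKWitnessed.mono {Q : Set S} (hP : IsKWitnessed fS P) (hQP : Q ⊆ P) :
    IsKWitnessed fS Q := by
  obtain ⟨α, hαS, hαT⟩ := hP
  refine ⟨fun q => α ⟨q, hQP q.2⟩, fun q => hαS _, fun T _ _ hT f => ?_⟩
  obtain ⟨t, ht⟩ := hαT T hT f
  exact ⟨t, fun q => ht _⟩

lemma IsKWitnessed.iUnion_spow [Finite S] (hP : IsKWitnessed fS P)
    (hgrp : IsGroupSet (cyclicSetPowers P)) : IsKWitnessed fS (⋃ n, spow P n) := by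
  obtain ⟨α, hαS, hαT⟩ := hP
  choose γ hγS hγT using fun x : ↥(⋃ n, spow P n) => exists_kTerm_of_mem_iUnion_spow hαS hgrp x.2
  refine ⟨γ, hγS, fun T _ _ hT f => ?_⟩
  obtain ⟨t, ht⟩ := hαT T hT f
  obtain ⟨m, hm⟩ := hT t
  exact ⟨spow t m, fun x => hγT x T f t m ht hm⟩

end Witness

theorem CPempty_kappa_witnessed_general
    {S : Type} [Semigroup S] [Finite S]
    {A : Type}
    (φ : FreeSemigroup A →ₙ* S) (hφ : Function.Surjective φ)
    (P : Set S) (hP : CPempty P) :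
    ∃ α : P → KTerm A,
      (∀ p : P, KEval (fun a => φ (FreeSemigroup.of a)) (α p) (p : S)) ∧
      (∀ (T : Type) [Semigroup T] [Finite T], IsAperiodic T →
        ∀ f : A → T, ∃ t : T, ∀ p : P, KEval f (α p) t) := by
  show IsKWitnessed _ P
  induction hP with
  | singleton s => exact isKWitnessed_singleton φ hφ s
  | mul _ _ hP hQ => exact hP.mul hQ
  | subset _ hQP _ hP => exact hP.mono hQP
  | group _ hgrp hP => exact hP.iUnion_spow hgrp

/-- Every member `P` of `𝒞𝒫_∅(S)` admits a function `α` assigning to each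
`p ∈ P` a κ-term over `A` which evaluates to `p` in `S` under the letter
assignment induced by `φ`, and such that in every finite aperiodic semigroup
`T`, under any assignment of the letters, all the terms `α p` evaluate to one
and the same element of `T`. -/
theorem CPempty_kappa_witnessed
    {S : Type} [Semigroup S] [Finite S]
    {A : Type} [Finite A]
    (φ : FreeSemigroup A →ₙ* S) (hφ : Function.Surjective φ)
    (P : Set S) (hP : CPempty P) :
    ∃ α : P → KTerm A,
      (∀ p : P, KEval (fun a => φ (FreeSemigroup.of a)) (α p) (p : S)) ∧
      (∀ (T : Type) [Semigroup T] [Finite T], IsAperiodic T →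
        ∀ f : A → T, ∃ t : T, ∀ p : P, KEval f (α p) t) :=
  CPempty_kappa_witnessed_general φ hφ P hP
end

section
/- Let π be a nonempty set of primes and let (p_i)_{i≥1} be an enumeration of π, that is, a sequence of primes whose set of values is exactly π (repetitions allowed). For a finite semigroup S, the following are equivalent: (1) every subgroup of S is a π-group; (2) for every s ∈ S there exists N such that for all n ≥ N, s^{(p_1⋯p_n)^{n!}} = s^ω, where s^ω denotes the unique idempotent power of s. -/
/-! The elements `e * sᵏ` form a cyclic group of order `d`, the minimal period of `e` under
right multiplication by `s`, and `s ^ M = e` as soon as `M` is past the index of `s` and `d ∣ M`.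
So (2) says that each such `d` divides `(p₁⋯pₙ) ^ n!` for large `n`, i.e. that its prime factors
lie in `π`. Conversely, by Cauchy's theorem a subgroup of order divisible by a prime `q` contains
an element of order `q`, and (2) forces `q ∣ (p₁⋯pₙ) ^ n!`, so `q` is one of the `pᵢ`. -/

open Function Filter

theorem pow_mul_pow_eq_self_of_le {M : Type*} [Monoid M] {x : M} {k n : ℕ}
    (hk : IsIdempotentElem (x ^ k)) (hkn : k ≤ n) : x ^ n * x ^ k = x ^ n := by
  obtain ⟨j, rfl⟩ := Nat.exists_eq_add_of_le' hkn
  rw [pow_add, mul_assoc, hk.eq]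

theorem isGroupSet_range {G S : Type*} [Group G] [Mul S] (f : G →ₙ* S) :
    IsGroupSet (Set.range f) := by
  refine ⟨?_, f 1, ⟨1, rfl⟩, ?_, ?_⟩
  · rintro _ ⟨a, rfl⟩ _ ⟨b, rfl⟩
    exact ⟨a * b, map_mul f a b⟩
  · rintro _ ⟨a, rfl⟩
    simp [← map_mul]
  · rintro _ ⟨a, rfl⟩
    exact ⟨f a⁻¹, ⟨a⁻¹, rfl⟩, by simp [← map_mul]⟩

section PrimeProducts

variable {p : ℕ → ℕ}

theorem prod_Icc_ne_zero (hp : ∀ i, 1 ≤ i → (p i).Prime) (n : ℕ) :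
    ∏ i ∈ Finset.Icc 1 n, p i ≠ 0 :=
  Finset.prod_ne_zero_iff.mpr fun i hi => (hp i (Finset.mem_Icc.mp hi).1).ne_zero

theorem eventually_dvd_prod_Icc_pow_factorial (hp : ∀ i, 1 ≤ i → (p i).Prime) {d : ℕ}
    (hd : d ≠ 0) (hdp : ∀ q ∈ d.primeFactors, ∃ i, 1 ≤ i ∧ p i = q) :
    ∀ᶠ n in atTop, d ∣ (∏ i ∈ Finset.Icc 1 n, p i) ^ n.factorial := by
  have hfactors : ∀ᶠ n in atTop, ∀ q ∈ d.primeFactors, q ∣ ∏ i ∈ Finset.Icc 1 n, p i := by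
    refine (Finset.eventually_all d.primeFactors).mpr fun q hq => ?_
    obtain ⟨i, hi, rfl⟩ := hdp q hq
    filter_upwards [eventually_ge_atTop i] with n hn
    exact Finset.dvd_prod_of_mem p (Finset.mem_Icc.mpr ⟨hi, hn⟩)
  filter_upwards [hfactors, eventually_ge_atTop d] with n hn hdn
  have hd_dvd : d ∣ (∏ i ∈ Finset.Icc 1 n, p i) ^ d :=
    (Nat.dvd_pow_self_iff hd (prod_Icc_ne_zero hp n)).mpr fun q hq =>
      Nat.mem_primeFactors.mpr ⟨Nat.prime_of_mem_primeFactors hq, hn q hq, prod_Icc_ne_zero hp n⟩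
  exact hd_dvd.trans (pow_dvd_pow _ (hdn.trans n.self_le_factorial))

theorem eventually_lt_prod_Icc_pow_factorial (hp : ∀ i, 1 ≤ i → (p i).Prime) (k : ℕ) :
    ∀ᶠ n in atTop, k < (∏ i ∈ Finset.Icc 1 n, p i) ^ n.factorial := by
  filter_upwards [eventually_ge_atTop (max k 1)] with n hn
  have hP : 1 < ∏ i ∈ Finset.Icc 1 n, p i :=
    (hp 1 le_rfl).one_lt.trans_le (Nat.le_of_dvd (Nat.pos_of_ne_zero (prod_Icc_ne_zero hp n))
      (Finset.dvd_prod_of_mem p (Finset.mem_Icc.mpr ⟨le_rfl, by omega⟩)))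
  calc k ≤ n.factorial := (le_of_max_le_left hn).trans n.self_le_factorial
    _ < _ := Nat.lt_pow_self hP

theorem exists_eq_of_prime_dvd_prod_Icc_pow (hp : ∀ i, 1 ≤ i → (p i).Prime) {q n k : ℕ}
    (hq : q.Prime) (hqP : q ∣ (∏ i ∈ Finset.Icc 1 n, p i) ^ k) : ∃ i, 1 ≤ i ∧ p i = q := by
  obtain ⟨i, hi, hqi⟩ := hq.prime.exists_mem_finset_dvd (hq.dvd_of_dvd_pow hqP)
  have hi1 := (Finset.mem_Icc.mp hi).1
  exact ⟨i, hi1, ((Nat.prime_dvd_prime_iff_eq hq (hp i hi1)).mp hqi).symm⟩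

end PrimeProducts

section Semigroup

variable {S : Type*} [Semigroup S]

theorem coe_iterate_mul_right (s y : S) (n : ℕ) :
    (((· * s)^[n] y : S) : WithOne S) = y * (s : WithOne S) ^ n := by
  induction n with
  | zero => simp
  | succ n ih => rw [iterate_succ_apply', WithOne.coe_mul, ih, pow_succ, mul_assoc]

theorem coe_spow (s : S) (n : ℕ) : ((spow s n : S) : WithOne S) = (s : WithOne S) ^ (n + 1) := by
  rw [spow, coe_iterate_mul_right, pow_succ']

namespace IsGroupSet

variable {H : Set S}

noncomputable abbrev group (hH : IsGroupSet H) : Group H :=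
  letI : Mul H := ⟨fun a b => ⟨a * b, hH.1 a a.2 b b.2⟩⟩
  letI : One H := ⟨⟨hH.2.choose, hH.2.choose_spec.1⟩⟩
  letI : Inv H := ⟨fun a => ⟨(hH.2.choose_spec.2.2 a a.2).choose,
    (hH.2.choose_spec.2.2 a a.2).choose_spec.1⟩⟩
  Group.ofLeftAxioms (fun a b c => Subtype.ext (mul_assoc (a : S) b c))
    (fun a => Subtype.ext (hH.2.choose_spec.2.1 a a.2).1)
    (fun a => Subtype.ext (hH.2.choose_spec.2.2 a a.2).choose_spec.2.2)

theorem exists_spow_of_prime_dvd_card (hH : IsGroupSet H) [Finite H] {q : ℕ} (hq : q.Prime)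
    (hqH : q ∣ Nat.card H) :
    ∃ s e : S, IsIdempotentElem e ∧ spow s (q - 1) = e ∧
      ∀ M, 0 < M → spow s (M - 1) = e → q ∣ M := by
  let _ := hH.group
  have : Fact q.Prime := ⟨hq⟩
  have coe_pow : ∀ (g : H) (n : ℕ), ((g ^ (n + 1) : H) : S) = spow (g : S) n := by
    intro g n
    induction n with
    | zero => simp [spow]
    | succ n ih => rw [pow_succ, spow, iterate_succ_apply', ← spow, ← ih]; rfl
  have coe_pow' : ∀ (g : H) M, 0 < M → ((g ^ M : H) : S) = spow (g : S) (M - 1) := by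
    intro g M hM
    rw [← coe_pow, Nat.sub_add_cancel hM]
  obtain ⟨g, hg⟩ := exists_prime_orderOf_dvd_card' q hqH
  refine ⟨g, ((1 : H) : S), congrArg Subtype.val (mul_one (1 : H)), ?_, fun M hM hgM => ?_⟩
  · rw [← coe_pow' g q hq.pos, ← hg, pow_orderOf_eq_one]
  · rw [← hg]
    exact orderOf_dvd_of_pow_eq_one (Subtype.ext ((coe_pow' g M hM).trans hgM))

end IsGroupSet

section Orbit

variable {s e : S} {m : ℕ}

theorem isPeriodicPt_mul_right (he : IsIdempotentElem e) (hm : spow s m = e) :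
    IsPeriodicPt (· * s) (m + 1) e := by
  apply WithOne.coe_injective
  rw [coe_iterate_mul_right, ← coe_spow, hm, ← WithOne.coe_mul, he.eq]

theorem iterate_mul_right_mul_iterate (he : IsIdempotentElem e) (hm : spow s m = e) (a b : ℕ) :
    (· * s)^[a] e * (· * s)^[b] e = (· * s)^[a + b] e := by
  apply WithOne.coe_injective
  have hcomm : Commute (e : WithOne S) ((s : WithOne S) ^ a) := by
    rw [← hm, coe_spow]
    exact Commute.pow_pow_self _ _ _
  rw [WithOne.coe_mul, coe_iterate_mul_right, coe_iterate_mul_right, coe_iterate_mul_right,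
    mul_assoc, ← mul_assoc _ (e : WithOne S), ← hcomm.eq, mul_assoc, ← mul_assoc,
    ← WithOne.coe_mul, he.eq, pow_add]

theorem exists_isGroupSet_card_eq_minimalPeriod (he : IsIdempotentElem e) (hm : spow s m = e) :
    ∃ H : Set S, IsGroupSet H ∧ Nat.card H = minimalPeriod (· * s) e := by
  set d := minimalPeriod (· * s) e
  have : NeZero d := ⟨((isPeriodicPt_mul_right he hm).minimalPeriod_pos m.succ_pos).ne'⟩
  let f : Multiplicative (ZMod d) →ₙ* S :=
    { toFun k := (· * s)^[k.toAdd.val] e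
      map_mul' a b := by
        rw [iterate_mul_right_mul_iterate he hm, toAdd_mul, ZMod.val_add,
          iterate_mod_minimalPeriod_eq] }
  have hf : Injective f := fun a b hab =>
    Multiplicative.toAdd.injective (ZMod.val_injective d
      ((iterate_eq_iterate_iff_of_lt_minimalPeriod (ZMod.val_lt _) (ZMod.val_lt _)).mp hab))
  refine ⟨Set.range f, isGroupSet_range f, ?_⟩
  rw [Nat.card_range_of_injective hf, Nat.card_congr Multiplicative.toAdd, Nat.card_zmod]

theorem spow_sub_one_eq_of_minimalPeriod_dvd (he : IsIdempotentElem e) (hm : spow s m = e)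
    {M : ℕ} (hmM : m < M) (hdM : minimalPeriod (· * s) e ∣ M) : spow s (M - 1) = e := by
  apply WithOne.coe_injective
  have hidem : IsIdempotentElem ((s : WithOne S) ^ (m + 1)) := by
    rw [← coe_spow, hm]
    exact he.map WithOne.coeMulHom
  rw [coe_spow, Nat.sub_add_cancel (by omega), ← pow_mul_pow_eq_self_of_le hidem hmM,
    ← Commute.pow_pow_self, ← coe_spow, hm, ← coe_iterate_mul_right,
    isPeriodicPt_iff_minimalPeriod_dvd.mpr hdM]

end Orbit

end Semigroup

theorem subgroups_pi_iff_nu_pi_eq_omega_general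
    (π : Set ℕ) (hπ : ∀ q ∈ π, Nat.Prime q)
    (p : ℕ → ℕ) (hmem : ∀ i, 1 ≤ i → p i ∈ π)
    (hsurj : ∀ q ∈ π, ∃ i, 1 ≤ i ∧ p i = q)
    (S : Type) [Semigroup S] [Finite S] :
    (∀ H : Set S, IsGroupSet H →
        ∀ q : ℕ, Nat.Prime q → q ∣ Nat.card ↥H → q ∈ π)
    ↔
    (∀ s e : S, IsIdempotentElem e → (∃ m : ℕ, spow s m = e) →
      ∃ N : ℕ, ∀ n, N ≤ n →
        spow s ((∏ i ∈ Finset.Icc 1 n, p i) ^ (Nat.factorial n) - 1) = e) := by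
  have hp : ∀ i, 1 ≤ i → (p i).Prime := fun i hi => hπ _ (hmem i hi)
  constructor
  · rintro hgroups s e he ⟨m, hm⟩
    obtain ⟨H, hH, hcard⟩ := exists_isGroupSet_card_eq_minimalPeriod he hm
    have hd : minimalPeriod (· * s) e ≠ 0 :=
      ((isPeriodicPt_mul_right he hm).minimalPeriod_pos m.succ_pos).ne'
    have hdiv := eventually_dvd_prod_Icc_pow_factorial hp hd fun q hq =>
      hsurj q (hgroups H hH q (Nat.prime_of_mem_primeFactors hq)
        (hcard ▸ Nat.dvd_of_mem_primeFactors hq))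
    obtain ⟨N, hN⟩ := eventually_atTop.mp (hdiv.and (eventually_lt_prod_Icc_pow_factorial hp m))
    exact ⟨N, fun n hn => spow_sub_one_eq_of_minimalPeriod_dvd he hm (hN n hn).2 (hN n hn).1⟩
  · intro hpow H hH q hq hqH
    obtain ⟨s, e, he, hse, hdvd⟩ := hH.exists_spow_of_prime_dvd_card hq hqH
    obtain ⟨N, hN⟩ := hpow s e he ⟨q - 1, hse⟩
    have hpos : 0 < (∏ i ∈ Finset.Icc 1 N, p i) ^ N.factorial :=
      Nat.pos_of_ne_zero (pow_ne_zero _ (prod_Icc_ne_zero hp N))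
    obtain ⟨i, hi, rfl⟩ := exists_eq_of_prime_dvd_prod_Icc_pow hp hq (hdvd _ hpos (hN N le_rfl))
    exact hmem i hi

/-- Let `π` be a nonempty set of primes and `(p_i)_{i ≥ 1}` an enumeration of
`π` (repetitions allowed).  For a finite semigroup `S`, the following are
equivalent: (1) every subgroup of `S` is a `π`-group; (2) for every `s ∈ S`
and the unique idempotent power `e = s^ω` of `s`, there exists `N` such that
for all `n ≥ N`, `s^((p₁⋯p_n)^(n!)) = s^ω`.  (Here `spow s m = s^(m+1)`, so
`s^j = spow s (j - 1)` for `j ≥ 1`.) -/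
theorem subgroups_pi_iff_nu_pi_eq_omega
    (π : Set ℕ) (hπne : π.Nonempty) (hπ : ∀ q ∈ π, Nat.Prime q)
    (p : ℕ → ℕ) (hmem : ∀ i, 1 ≤ i → p i ∈ π)
    (hsurj : ∀ q ∈ π, ∃ i, 1 ≤ i ∧ p i = q)
    (S : Type) [Semigroup S] [Finite S] :
    (∀ H : Set S, IsGroupSet H →
        ∀ q : ℕ, Nat.Prime q → q ∣ Nat.card ↥H → q ∈ π)
    ↔
    (∀ s e : S, IsIdempotentElem e → (∃ m : ℕ, spow s m = e) →
      ∃ N : ℕ, ∀ n, N ≤ n →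
        spow s ((∏ i ∈ Finset.Icc 1 n, p i) ^ (Nat.factorial n) - 1) = e) :=
  subgroups_pi_iff_nu_pi_eq_omega_general π hπ p hmem hsurj S
end
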